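/- Let K ⊆ ℝ^d be an ℝ-cone and suppose that w ∈ ℝ^d satisfies ⟨u,w⟩ > 0 for all nonzero u ∈ K. Then ⟨z,w⟩ ≠ 0 for all nonzero z in the complexification K^ℂ. -/

import Mathlib

/-! Writing z = c((u + v) + i(u - v)) with u, v ∈ K, the pairing ⟨z, w⟩ is c times a complex
number whose real part is ⟨u, w⟩ + ⟨v, w⟩. Both summands are nonnegative and vanish only at
u = 0 resp. v = 0, so ⟨z, w⟩ = 0 forces c = 0 or u = v = 0, i.e. z = 0. -/

open scoped BigOperators Pointwise

noncomputable section

/-- The Euclidean norm of a finitely-indexed vector (real or complex entries). -/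
def enorm' {ι : Type*} [Fintype ι] {E : Type*} [Norm E] (u : ι → E) : ℝ :=
  Real.sqrt (∑ i, ‖u i‖ ^ 2)

/-- The operator norm of a real matrix induced by the Euclidean norm. -/
def opNorm {ι : Type*} [Fintype ι] (A : Matrix ι ι ℝ) : ℝ :=
  sSup ((fun u : ι → ℝ => enorm' (A.mulVec u)) '' {u : ι → ℝ | enorm' u = 1})

/-- A multicone for a set of matrices (Definition 1.2). -/
def IsMulticone {ι : Type*} [Fintype ι] (S : Set (Matrix ι ι ℝ)) {m : ℕ}
    (K : Fin m → Set (ι → ℝ)) (w : ι → ℝ) : Prop :=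
  (∀ j, IsClosed (K j)) ∧ (∀ j, Convex ℝ (K j)) ∧ (∀ j, (interior (K j)).Nonempty) ∧
  (∀ j, ∀ c : ℝ, 0 ≤ c → ∀ u ∈ K j, c • u ∈ K j) ∧
  (∑ i, w i ^ 2 = 1) ∧
  (∀ u ∈ ⋃ j, K j, u ≠ 0 → 0 < ∑ i, u i * w i) ∧
  (∀ A ∈ S, ∀ j, ∃ ℓ, ∀ u ∈ K j, u ≠ 0 →
    A.mulVec u ∈ interior (K ℓ) ∨ -A.mulVec u ∈ interior (K ℓ)) ∧
  (∀ j₁ j₂, j₁ ≠ j₂ → K j₁ ∩ K j₂ = {0})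

/-- The set of matrices is multipositive if it admits a multicone. -/
def IsMultipositive {ι : Type*} [Fintype ι] (S : Set (Matrix ι ι ℝ)) : Prop :=
  ∃ (m : ℕ) (_ : 0 < m) (K : Fin m → Set (ι → ℝ)) (w : ι → ℝ), IsMulticone S K w

/-- The semigroup generated by a set of matrices. -/
def semigroupOf {ι : Type*} [Fintype ι] [DecidableEq ι] (S : Set (Matrix ι ι ℝ)) :
    Set (Matrix ι ι ℝ) :=
  {B | ∃ l : List (Matrix ι ι ℝ), l ≠ [] ∧ (∀ M ∈ l, M ∈ S) ∧ B = l.prod}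

/-- The complexification of a set in ℝ^ι. -/
def complexify {ι : Type*} (K : Set (ι → ℝ)) : Set (ι → ℂ) :=
  {z | ∃ (c : ℂ) (u v : ι → ℝ), u ∈ K ∧ v ∈ K ∧
    z = fun i => c * (((u i : ℂ) + (v i : ℂ)) + Complex.I * ((u i : ℂ) - (v i : ℂ)))}

/-- The action of a real matrix on complex vectors. -/
def mulVecC {ι : Type*} [Fintype ι] (A : Matrix ι ι ℝ) (z : ι → ℂ) : ι → ℂ :=
  (A.map (fun x : ℝ => (x : ℂ))).mulVec z

/-- An ℝ-cone: closed, convex, nonempty interior, positively homogeneous, proper. -/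
def IsRCone {ι : Type*} [Fintype ι] (K : Set (ι → ℝ)) : Prop :=
  IsClosed K ∧ Convex ℝ K ∧ (interior K).Nonempty ∧
  (∀ c : ℝ, 0 < c → c • K = K) ∧ K ∩ (-K) = {0}

end

section PositivePairing

variable {ι : Type*} [Fintype ι] {K : Set (ι → ℝ)} {w : ι → ℝ}

lemma sum_mul_nonneg_of_mem (hw : ∀ u ∈ K, u ≠ 0 → 0 < ∑ i, u i * w i) {u : ι → ℝ}
    (hu : u ∈ K) : 0 ≤ ∑ i, u i * w i := by
  rcases eq_or_ne u 0 with rfl | hu0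
  · simp
  · exact (hw u hu hu0).le

lemma eq_zero_of_sum_mul_eq_zero (hw : ∀ u ∈ K, u ≠ 0 → 0 < ∑ i, u i * w i) {u : ι → ℝ}
    (hu : u ∈ K) (h : ∑ i, u i * w i = 0) : u = 0 := by
  by_contra hu0
  exact (hw u hu hu0).ne' h

end PositivePairing

lemma re_sum_complexify_mul {ι : Type*} [Fintype ι] (u v w : ι → ℝ) :
    (∑ i, (((u i : ℂ) + (v i : ℂ)) + Complex.I * ((u i : ℂ) - (v i : ℂ))) * (w i : ℂ)).re =
      ∑ i, u i * w i + ∑ i, v i * w i := by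
  simp only [Complex.re_sum, ← Finset.sum_add_distrib]
  refine Finset.sum_congr rfl fun i _ => ?_
  simp only [Complex.mul_re, Complex.add_re, Complex.add_im, Complex.ofReal_re,
    Complex.ofReal_im, Complex.I_re, Complex.I_im, Complex.sub_re, Complex.sub_im,
    Complex.mul_im]
  ring

theorem stmt11_general {d : ℕ} (K : Set (Fin d → ℝ)) (w : Fin d → ℝ)
    (hw : ∀ u ∈ K, u ≠ 0 → 0 < ∑ i, u i * w i) :
    ∀ z ∈ complexify K, z ≠ 0 → (∑ i, z i * (w i : ℂ)) ≠ 0 := by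
  rintro z ⟨c, u, v, hu, hv, rfl⟩ hz h
  simp only [mul_assoc, ← Finset.mul_sum, mul_eq_zero] at h
  rcases h with rfl | h
  · exact hz (funext fun i => zero_mul _)
  · have hre := congrArg Complex.re h
    rw [re_sum_complexify_mul, Complex.zero_re] at hre
    have ha := sum_mul_nonneg_of_mem hw hu
    have hb := sum_mul_nonneg_of_mem hw hv
    obtain rfl := eq_zero_of_sum_mul_eq_zero hw hu (by linarith)
    obtain rfl := eq_zero_of_sum_mul_eq_zero hw hv (by linarith)
    exact hz (funext fun i => by simp)

/-- Lemma 3.5: if ⟨u,w⟩ > 0 for all nonzero u in the ℝ-cone K, then ⟨z,w⟩ ≠ 0 for all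
nonzero z in the complexification K^ℂ. -/
theorem stmt11 {d : ℕ} (K : Set (Fin d → ℝ)) (hK : IsRCone K) (w : Fin d → ℝ)
    (hw : ∀ u ∈ K, u ≠ 0 → 0 < ∑ i, u i * w i) :
    ∀ z ∈ complexify K, z ≠ 0 → (∑ i, z i * (w i : ℂ)) ≠ 0 :=
  stmt11_general K w hw
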